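/- arXiv:2211.15099 — 3 statements merged into one kernel-verified Lean document; each statement's English description precedes it below -/
import Mathlib

section
/- Let $U:[0,R)\to\mathbb{R}$ be a twice continuously differentiable nonnegative function with $U(0)=0$, $U'(0)=0$, satisfying $U''(r)+\frac{N-1}{r}U'(r)\le C$ for all $r\in(0,R)$, where $N\ge 1$ and $C>0$. Then $U(r)\le \frac{C}{2N} r^2$ for all $r\in[0,R)$. -/
/-!
Multiplying the inequality by the integrating factor `r ^ (N - 1)` turns it into
`(r ^ (N - 1) U')' ≤ C r ^ (N - 1)`; integrating from `0` gives `U' r ≤ C r / N`, and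
integrating once more gives `U r ≤ C r² / (2N)`.
-/

open Set

theorem le_of_hasDerivAt_le_on_Ico {a b : ℝ} {f g f' g' : ℝ → ℝ}
    (hf : ∀ x ∈ Ico a b, HasDerivAt f (f' x) x) (hg : ∀ x ∈ Ico a b, HasDerivAt g (g' x) x)
    (hderiv : ∀ x ∈ Ioo a b, f' x ≤ g' x) (ha : f a ≤ g a) :
    ∀ x ∈ Ico a b, f x ≤ g x := by
  have hdiff : ∀ x ∈ Ico a b, HasDerivAt (g - f) (g' x - f' x) x :=
    fun x hx => (hg x hx).sub (hf x hx)
  have hmono : MonotoneOn (g - f) (Ico a b) := by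
    refine monotoneOn_of_hasDerivWithinAt_nonneg (f' := g' - f') (convex_Ico a b)
      (fun x hx => (hdiff x hx).continuousAt.continuousWithinAt) (fun x hx => ?_) (fun x hx => ?_)
    · rw [interior_Ico] at hx
      exact (hdiff x (Ioo_subset_Ico_self hx)).hasDerivWithinAt
    · rw [interior_Ico] at hx
      exact sub_nonneg.2 (hderiv x hx)
  intro x hx
  have := hmono (left_mem_Ico.2 (hx.1.trans_lt hx.2)) hx hx.1
  simp only [Pi.sub_apply] at this
  linarith

theorem deriv_le_of_radial_laplacian_le (n : ℕ) {C R : ℝ} {U' U'' : ℝ → ℝ}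
    (hU2 : ∀ r ∈ Ico 0 R, HasDerivAt U' (U'' r) r) (hU'0 : U' 0 = 0)
    (hineq : ∀ r ∈ Ioo 0 R, U'' r + n / r * U' r ≤ C) :
    ∀ r ∈ Ico 0 R, U' r ≤ C / (n + 1) * r := by
  have hflux : ∀ r ∈ Ico 0 R, r ^ n * U' r ≤ C / (n + 1) * r ^ (n + 1) := by
    refine le_of_hasDerivAt_le_on_Ico
      (fun r hr => (hasDerivAt_pow n r).mul (hU2 r hr))
      (fun r _ => (hasDerivAt_pow (n + 1) r).const_mul (C / (n + 1))) (fun r hr => ?_) ?_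
    · have hpow : (n : ℝ) * r ^ (n - 1) = n / r * r ^ n := by
        rcases Nat.eq_zero_or_pos n with rfl | hpos
        · simp
        · rw [← pow_sub_one_mul hpos.ne' r]
          field_simp [hr.1.ne']
      calc (n : ℝ) * r ^ (n - 1) * U' r + r ^ n * U'' r
          = r ^ n * (U'' r + n / r * U' r) := by rw [hpow]; ring
        _ ≤ r ^ n * C := mul_le_mul_of_nonneg_left (hineq r hr) (by positivity [hr.1])
        _ = C / (n + 1) * (↑(n + 1) * r ^ (n + 1 - 1)) := by push_cast; field_simp
    · simp [hU'0]
  intro r hr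
  rcases hr.1.eq_or_lt with rfl | hpos
  · simp [hU'0]
  · refine le_of_mul_le_mul_left ?_ (pow_pos hpos n)
    calc r ^ n * U' r ≤ C / (n + 1) * r ^ (n + 1) := hflux r hr
      _ = r ^ n * (C / (n + 1) * r) := by ring

theorem stmt0_general (N : ℕ) (hN : 1 ≤ N) (C R : ℝ)
    (U U' U'' : ℝ → ℝ)
    (hU1 : ∀ r ∈ Set.Ico (0:ℝ) R, HasDerivAt U (U' r) r)
    (hU2 : ∀ r ∈ Set.Ico (0:ℝ) R, HasDerivAt U' (U'' r) r)
    (hU0 : U 0 = 0) (hU'0 : U' 0 = 0)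
    (hineq : ∀ r ∈ Set.Ioo (0:ℝ) R, U'' r + (N - 1) / r * U' r ≤ C) :
    ∀ r ∈ Set.Ico (0:ℝ) R, U r ≤ C / (2 * N) * r ^ 2 := by
  obtain ⟨n, rfl⟩ : ∃ n, N = n + 1 := ⟨N - 1, by omega⟩
  have hslope : ∀ r ∈ Ico 0 R, U' r ≤ C / (n + 1) * r :=
    deriv_le_of_radial_laplacian_le n hU2 hU'0 (by simpa using hineq)
  refine le_of_hasDerivAt_le_on_Ico hU1
    (fun r _ => (hasDerivAt_pow 2 r).const_mul (C / (2 * ↑(n + 1)))) (fun r hr => ?_)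
    (by simp [hU0])
  calc U' r ≤ C / (n + 1) * r := hslope r (Ioo_subset_Ico_self hr)
    _ = C / (2 * ↑(n + 1)) * (↑2 * r ^ (2 - 1)) := by push_cast; field_simp

/-- The ODE inequality underlying optimal quadratic regularity: if `U` is a nonnegative
`C²` function on `[0,R)` with `U(0)=U'(0)=0` and `U'' + (N-1)/r · U' ≤ C`, then
`U(r) ≤ C/(2N) r²`. -/
theorem stmt0 (N : ℕ) (hN : 1 ≤ N) (C R : ℝ) (hC : 0 < C) (hR : 0 < R)
    (U U' U'' : ℝ → ℝ)
    (hU1 : ∀ r ∈ Set.Ico (0:ℝ) R, HasDerivAt U (U' r) r)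
    (hU2 : ∀ r ∈ Set.Ico (0:ℝ) R, HasDerivAt U' (U'' r) r)
    (hU''cont : ContinuousOn U'' (Set.Ico 0 R))
    (hUnonneg : ∀ r ∈ Set.Ico (0:ℝ) R, 0 ≤ U r)
    (hU0 : U 0 = 0) (hU'0 : U' 0 = 0)
    (hineq : ∀ r ∈ Set.Ioo (0:ℝ) R, U'' r + (N - 1) / r * U' r ≤ C) :
    ∀ r ∈ Set.Ico (0:ℝ) R, U r ≤ C / (2 * N) * r ^ 2 :=
  stmt0_general N hN C R U U' U'' hU1 hU2 hU0 hU'0 hineq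
end

section
/- Let $\varphi:\mathbb{R}^N\to\mathbb{R}$ be concave with compact convex positivity support $K=\overline{\{\varphi>0\}}$. Let $u:\mathbb{R}^N\to\mathbb{R}$ be continuous with $u\ge\varphi$, $u\ge 0$, and suppose that for every hyperplane $H$ not intersecting $K$, $u$ is dominated by its reflection across $H$ on the side of $H$ away from $K$ (monotonicity from moving planes). Then for every $x\notin K$ with projection $\bar x$ onto $K$ and $e_0=\frac{x-\bar x}{|x-\bar x|}$, there exists $\theta_0>0$ depending only on $\mathrm{dist}(x,K)$ and $\mathrm{diam}(K)$ such that $t\mapsto u(x+te)$ is nonincreasing for $t\ge0$ for every unit vector $e$ with $|e-e_0|\le\theta_0$. -/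
open Metric
open scoped RealInnerProductSpace

/-- Cone of monotonicity from moving planes: if `u ≥ max(φ,0)` is dominated by its
reflection across every hyperplane not meeting the compact convex support
`K = closure {φ > 0}` of the concave obstacle `φ` (on the side away from `K`), then
outside `K` the function `u` is nonincreasing along every direction in a uniform cone
around the radial direction, with aperture depending only on `dist(x,K)` and `diam(K)`. -/
theorem stmt15 (N : ℕ) (d Dm : ℝ) (hd : 0 < d) (hDm : 0 < Dm) :
    ∃ θ₀ > (0:ℝ),
    ∀ (φ u : EuclideanSpace ℝ (Fin N) → ℝ)
      (K : Set (EuclideanSpace ℝ (Fin N))),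
      ConcaveOn ℝ Set.univ φ →
      K = closure {x | 0 < φ x} → IsCompact K → Convex ℝ K → K.Nonempty →
      Metric.diam K ≤ Dm →
      Continuous u → (∀ x, φ x ≤ u x) → (∀ x, 0 ≤ u x) →
      (∀ (e : EuclideanSpace ℝ (Fin N)) (lam : ℝ), ‖e‖ = 1 →
        (∀ z ∈ K, ⟪z, e⟫ < lam) →
        ∀ x : EuclideanSpace ℝ (Fin N), lam ≤ ⟪x, e⟫ →
          u x ≤ u (x + (2 * (lam - ⟪x, e⟫)) • e)) →
      ∀ x : EuclideanSpace ℝ (Fin N), x ∉ K →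
      ∀ xbar ∈ K, ‖x - xbar‖ = Metric.infDist x K →
      Metric.infDist x K = d →
      ∀ e : EuclideanSpace ℝ (Fin N), ‖e‖ = 1 →
        ‖e - ‖x - xbar‖⁻¹ • (x - xbar)‖ ≤ θ₀ →
        ∀ s t : ℝ, 0 ≤ s → s ≤ t → u (x + t • e) ≤ u (x + s • e) := by
  refine ⟨d / (2 * (Dm + d)), by positivity, ?_⟩
  intro φ u K hφ hK hKcomp hKconv hKne hdiam hucont hφu hu0 hrefl x hxK xbar hxbarK hproj hdist
    e he hecone s t hs hst
  have hdnorm : ‖x - xbar‖ = d := by rw [hproj, hdist]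
  -- projection inequality
  have hip : ∀ z ∈ K, ⟪x - xbar, z - xbar⟫ ≤ 0 := by
    rw [← norm_eq_iInf_iff_real_inner_le_zero hKconv hxbarK]
    rw [hproj, Metric.infDist_eq_iInf]
    simp_rw [dist_eq_norm]
  -- key strict bound
  have hkey : ∀ z ∈ K, ⟪z, e⟫ ≤ ⟪x, e⟫ - d / 2 := by
    intro z hz
    set e₀ : EuclideanSpace ℝ (Fin N) := ‖x - xbar‖⁻¹ • (x - xbar) with he₀
    have h1 : ⟪z - x, e₀⟫ ≤ -d := by
      have : ⟪z - x, x - xbar⟫ = ⟪z - xbar, x - xbar⟫ - ⟪x - xbar, x - xbar⟫ := by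
        rw [← inner_sub_left]
        congr 1
        abel
      have h2 : ⟪z - x, x - xbar⟫ ≤ -(d * d) := by
        rw [this, real_inner_self_eq_norm_mul_norm, hdnorm]
        have := hip z hz
        rw [real_inner_comm] at this
        linarith
      have : ⟪z - x, e₀⟫ = ‖x - xbar‖⁻¹ * ⟪z - x, x - xbar⟫ := by
        rw [he₀, real_inner_smul_right]
      rw [this, hdnorm]
      have hd' : (0:ℝ) < d⁻¹ := by positivity
      calc d⁻¹ * ⟪z - x, x - xbar⟫ ≤ d⁻¹ * (-(d * d)) := by
            exact mul_le_mul_of_nonneg_left h2 hd'.le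
        _ = -d := by field_simp
    have hzx : ‖z - x‖ ≤ Dm + d := by
      calc ‖z - x‖ ≤ ‖z - xbar‖ + ‖xbar - x‖ := by
            have hzw : z - x = (z - xbar) + (xbar - x) := by abel
            rw [hzw]
            exact norm_add_le _ _
        _ ≤ Dm + d := by
            have h3 : ‖z - xbar‖ ≤ Dm := by
              have := Metric.dist_le_diam_of_mem hKcomp.isBounded hz hxbarK
              rw [dist_eq_norm] at this; linarith
            have h4 : ‖xbar - x‖ = d := by rw [norm_sub_rev, hdnorm]
            linarith
    have h5 : ⟪z - x, e - e₀⟫ ≤ d / 2 := by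
      calc ⟪z - x, e - e₀⟫ ≤ ‖z - x‖ * ‖e - e₀‖ := real_inner_le_norm _ _
        _ ≤ (Dm + d) * (d / (2 * (Dm + d))) := by
            apply mul_le_mul hzx hecone (norm_nonneg _) (by positivity)
        _ = d / 2 := by field_simp
    have h6 : ⟪z - x, e⟫ = ⟪z - x, e₀⟫ + ⟪z - x, e - e₀⟫ := by
      rw [← inner_add_right]
      congr 1
      abel
    have h7 : ⟪z - x, e⟫ = ⟪z, e⟫ - ⟪x, e⟫ := by rw [inner_sub_left]
    nlinarith [h1, h5, h6, h7]
  -- apply reflection with lam = ⟪x,e⟫ + (s+t)/2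
  have hee : ⟪e, e⟫ = 1 := by
    rw [real_inner_self_eq_norm_mul_norm, he]; norm_num
  have hxte : ⟪x + t • e, e⟫ = ⟪x, e⟫ + t := by
    rw [inner_add_left, real_inner_smul_left, hee]; ring
  have happ := hrefl e (⟪x, e⟫ + (s + t) / 2) he
    (fun z hz => lt_of_le_of_lt (hkey z hz) (by linarith)) (x + t • e)
    (by rw [hxte]; linarith)
  rw [hxte] at happ
  have harg : (x + t • e) + (2 * ((⟪x, e⟫ + (s + t) / 2) - (⟪x, e⟫ + t))) • e = x + s • e := by
    have h9 : 2 * ((⟪x, e⟫ + (s + t) / 2) - (⟪x, e⟫ + t)) = s - t := by ring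
    rw [h9, add_assoc, ← add_smul]
    congr 1
    ring
  rwa [harg] at happ
end

section
/- Let $g:\mathbb{R}^N\to\mathbb{R}$ be bounded and continuous, and suppose there exist $\alpha\in(0,1]$, $C>0$, $h_0>0$ such that for all $h\in(0,h_0)$ and every ball $B$ of radius $h$ contained in a fixed open set $\Omega$ with $\mathrm{dist}(B,\partial\Omega)\le 2h$: (i) $\sup_B g \le 1+Ch^\alpha$, and (ii) $\frac{1}{|B|}\int_B |g-1| \le Ch^\alpha$. Then $g(x)\to 1$ as $x\to\partial\Omega$ within $\Omega$, with the quantitative rate: for any sequence $x_n\in\Omega$ with $d_n=\mathrm{dist}(x_n,\partial\Omega)\to0$, along which $g$ is continuous with modulus $\omega(r)\le Lr$ on $B_{d_n/2}(x_n)$, one has $|g(x_n)-1|\le C'(d_n^{\alpha}+d_n^{\alpha/2})$ for a constant $C'$ depending only on $C,L,N$. -/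
/-!
At a point `x` with `d = dist(x, ∂Ω) > 0`, the ball `B(x, d/2)` lies in `Ω` and is close to
`∂Ω`, so the average of `|g - 1|` over it is at most `C (d/2)^α`; hence `|g - 1| ≤ C (d/2)^α`
somewhere in the ball, and the Lipschitz bound carries this to `x` at the cost of `L d/2`.
When `d = 0`, every small ball around `x` qualifies, so `g` comes arbitrarily close to `1`
arbitrarily close to `x`, and continuity forces `g x = 1`.
-/

open MeasureTheory Metric Filter Topology

theorem IsPreconnected.subset_of_disjoint_frontier {X : Type*} [TopologicalSpace X]
    {s u : Set X} (hs : IsPreconnected s) (hu : IsOpen u) (hsu : (s ∩ u).Nonempty)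
    (hd : Disjoint s (frontier u)) : s ⊆ u := by
  refine hs.subset_left_of_subset_union hu isOpen_interior
    (disjoint_compl_right.mono_right interior_subset) ?_ hsu
  calc s ⊆ (frontier u)ᶜ := hd.subset_compl_right
    _ = u ∪ interior uᶜ := by rw [compl_frontier_eq_union_interior, hu.interior_eq]

theorem Metric.ball_subset_of_le_infDist_frontier {E : Type*} [NormedAddCommGroup E]
    [NormedSpace ℝ E] {Ω : Set E} (hΩ : IsOpen Ω) {x : E} (hx : x ∈ Ω) {r : ℝ}
    (hr : r ≤ infDist x (frontier Ω)) : ball x r ⊆ Ω := by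
  rcases le_or_gt r 0 with hr0 | hr0
  · simp [ball_eq_empty.2 hr0]
  exact (convex_ball x r).isPreconnected.subset_of_disjoint_frontier hΩ
    ⟨x, mem_ball_self hr0, hx⟩ (disjoint_ball_infDist.mono_left (ball_subset_ball hr))

theorem exists_mem_ball_le_of_average_le {X : Type*} [MetricSpace X] [ProperSpace X]
    [MeasurableSpace X] [OpensMeasurableSpace X] {μ : Measure X} [μ.IsOpenPosMeasure]
    [IsFiniteMeasureOnCompacts μ] {f : X → ℝ} (hf : Continuous f) {c : X} {r ε : ℝ}
    (hr : 0 < r) (havg : (μ (ball c r)).toReal⁻¹ * ∫ x in ball c r, f x ∂μ ≤ ε) :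
    ∃ x ∈ ball c r, f x ≤ ε := by
  have hint : IntegrableOn f (ball c r) μ :=
    (hf.continuousOn.integrableOn_compact (isCompact_closedBall c r)).mono_set
      ball_subset_closedBall
  obtain ⟨x, hx, hfx⟩ := exists_le_setAverage (measure_ball_pos μ c hr).ne'
    measure_ball_lt_top.ne hint
  exact ⟨x, hx, hfx.trans (by rwa [setAverage_eq, smul_eq_mul])⟩

theorem LipschitzOnWith.abs_sub_le_of_mem_ball {X : Type*} [PseudoMetricSpace X] {g : X → ℝ}
    {L : NNReal} {x y : X} {r a : ℝ} (hg : LipschitzOnWith L g (ball x r)) (hy : y ∈ ball x r) :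
    |g x - a| ≤ |g y - a| + L * r := by
  have hgxy : dist (g x) (g y) ≤ L * r :=
    (hg.dist_le_mul x (mem_ball_self (pos_of_mem_ball hy)) y hy).trans
      (mul_le_mul_of_nonneg_left (mem_ball'.1 hy).le L.coe_nonneg)
  rw [Real.dist_eq] at hgxy
  calc |g x - a| ≤ |g x - g y| + |g y - a| := abs_sub_le _ _ _
    _ ≤ |g y - a| + L * r := by linarith

theorem ContinuousAt.eq_of_eventually_exists_mem_ball {X : Type*} [PseudoMetricSpace X]
    {g : X → ℝ} {x : X} (hg : ContinuousAt g x) {a : ℝ} {φ : ℝ → ℝ}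
    (hφ : Tendsto φ (𝓝[>] 0) (𝓝 0)) (h : ∀ᶠ r in 𝓝[>] 0, ∃ y ∈ ball x r, |g y - a| ≤ φ r) :
    g x = a := by
  refine eq_of_forall_dist_le fun ε hε => ?_
  obtain ⟨δ, hδ, hgδ⟩ := Metric.continuousAt_iff.1 hg (ε / 2) (half_pos hε)
  obtain ⟨r, ⟨y, hy, hgy⟩, hφr, hrδ⟩ :=
    (h.and ((hφ.eventually (gt_mem_nhds (half_pos hε))).and (Ioo_mem_nhdsGT hδ))).exists
  have hgxy := hgδ (mem_ball.1 hy |>.trans hrδ.2)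
  rw [Real.dist_eq] at hgxy ⊢
  calc |g x - a| ≤ |g y - g x| + |g y - a| := by
        rw [abs_sub_comm (g y) (g x)]; exact abs_sub_le _ _ _
    _ ≤ ε := by linarith

section AverageDecay

variable {X : Type*} [MetricSpace X] [ProperSpace X] [MeasurableSpace X]
  [OpensMeasurableSpace X] {μ : Measure X} [μ.IsOpenPosMeasure] [IsFiniteMeasureOnCompacts μ]

def AverageDecayNearFrontier (μ : Measure X) (Ω : Set X) (g : X → ℝ) (a C α h₀ : ℝ) : Prop :=
  ∀ h, 0 < h → h < h₀ → ∀ c, ball c h ⊆ Ω → (∃ p ∈ ball c h, infDist p (frontier Ω) ≤ 2 * h) →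
    (μ (ball c h)).toReal⁻¹ * ∫ y in ball c h, |g y - a| ∂μ ≤ C * h ^ α

variable {Ω : Set X} {g : X → ℝ} {a C α h₀ : ℝ} {x : X}

theorem AverageDecayNearFrontier.eq_of_infDist_eq_zero
    (hdecay : AverageDecayNearFrontier μ Ω g a C α h₀) (hΩ : IsOpen Ω) (hg : Continuous g)
    (hα : 0 < α) (hh₀ : 0 < h₀) (hx : x ∈ Ω) (hd : infDist x (frontier Ω) = 0) : g x = a := by
  have hφ : Tendsto (fun h : ℝ => C * h ^ α) (𝓝[>] 0) (𝓝 0) := by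
    have := ((Real.continuousAt_rpow_const 0 α (Or.inr hα.le)).const_mul C).tendsto
    simpa [Real.zero_rpow hα.ne'] using this.mono_left nhdsWithin_le_nhds
  obtain ⟨ε, hε, hεΩ⟩ := nhds_basis_ball.mem_iff.1 (hΩ.mem_nhds hx)
  refine hg.continuousAt.eq_of_eventually_exists_mem_ball hφ ?_
  filter_upwards [Ioo_mem_nhdsGT (lt_min hε hh₀)] with h ⟨hh, hhε⟩
  refine exists_mem_ball_le_of_average_le (hg.sub continuous_const).abs hh
    (hdecay h hh (hhε.trans_le (min_le_right _ _)) x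
      ((ball_subset_ball (hhε.trans_le (min_le_left _ _)).le).trans hεΩ)
      ⟨x, mem_ball_self hh, by rw [hd]; positivity⟩)

theorem AverageDecayNearFrontier.abs_sub_le_of_infDist_pos {E : Type*}
    [NormedAddCommGroup E] [NormedSpace ℝ E] [ProperSpace E] [MeasurableSpace E]
    [OpensMeasurableSpace E] {μ : Measure E} [μ.IsOpenPosMeasure] [IsFiniteMeasureOnCompacts μ]
    {Ω : Set E} {g : E → ℝ} {x : E} {L : NNReal}
    (hdecay : AverageDecayNearFrontier μ Ω g a C α h₀) (hΩ : IsOpen Ω) (hg : Continuous g) (hx : x ∈ Ω) (hd : 0 < infDist x (frontier Ω))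
    (hdh₀ : infDist x (frontier Ω) < 2 * h₀)
    (hlip : LipschitzOnWith L g (ball x (infDist x (frontier Ω) / 2))) :
    |g x - a| ≤ C * (infDist x (frontier Ω) / 2) ^ α + L * (infDist x (frontier Ω) / 2) := by
  set r := infDist x (frontier Ω) / 2 with hr_def
  have hr : 0 < r := half_pos hd
  obtain ⟨y, hy, hgy⟩ := exists_mem_ball_le_of_average_le (f := fun y => |g y - a|)
    (hg.sub continuous_const).abs hr
    (hdecay r hr (by linarith) x (ball_subset_of_le_infDist_frontier hΩ hx (by linarith))
      ⟨x, mem_ball_self hr, by linarith⟩)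
  linarith [hlip.abs_sub_le_of_mem_ball (a := a) hy]

end AverageDecay

theorem mul_half_rpow_add_mul_half_le {C L d α : ℝ} (hC : 0 ≤ C) (hL : 0 ≤ L) (hd : 0 < d) (hd1 : d ≤ 1)
    (hα : 0 < α) (hα2 : α ≤ 2) :
    C * (d / 2) ^ α + L * (d / 2) ≤ (C + L) * (d ^ α + d ^ (α / 2)) := by
  have h1 : C * (d / 2) ^ α ≤ C * d ^ α :=
    mul_le_mul_of_nonneg_left (Real.rpow_le_rpow (by positivity) (by linarith) hα.le) hC
  have h2 : d ≤ d ^ (α / 2) := by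
    simpa using Real.rpow_le_rpow_of_exponent_ge hd hd1 (by linarith : α / 2 ≤ 1)
  have : 0 ≤ d ^ α := by positivity
  have : 0 ≤ d ^ (α / 2) := by positivity
  nlinarith

theorem stmt17_general (N : ℕ) (C : ℝ) (L : NNReal) (hC : 0 < C) :
    ∃ C' > (0:ℝ),
    ∀ (Ω : Set (EuclideanSpace ℝ (Fin N))), IsOpen Ω → Ω.Nonempty →
    ∀ g : EuclideanSpace ℝ (Fin N) → ℝ, Continuous g → (∃ Kb : ℝ, ∀ x, |g x| ≤ Kb) →
    ∀ α : ℝ, α ∈ Set.Ioc (0:ℝ) 1 →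
    ∀ h₀ : ℝ, 0 < h₀ →
    (∀ h : ℝ, 0 < h → h < h₀ →
      ∀ c : EuclideanSpace ℝ (Fin N), ball c h ⊆ Ω →
        (∃ p ∈ ball c h, Metric.infDist p (frontier Ω) ≤ 2 * h) →
        (∀ x ∈ ball c h, g x ≤ 1 + C * h ^ α) ∧
        (volume (ball c h)).toReal⁻¹ * (∫ x in ball c h, |g x - 1|) ≤ C * h ^ α) →
    ∀ x : ℕ → EuclideanSpace ℝ (Fin N), (∀ n, x n ∈ Ω) →
    Tendsto (fun n => Metric.infDist (x n) (frontier Ω)) atTop (nhds 0) →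
    (∀ n, LipschitzOnWith L g (ball (x n) (Metric.infDist (x n) (frontier Ω) / 2))) →
    ∀ᶠ n in atTop,
      |g (x n) - 1| ≤ C' * ((Metric.infDist (x n) (frontier Ω)) ^ α
        + (Metric.infDist (x n) (frontier Ω)) ^ (α / 2)) := by
  refine ⟨C + L, by positivity, ?_⟩
  intro Ω hΩ _ g hg _ α ⟨hα0, hα1⟩ h₀ hh₀ hyp x hxΩ htend hlip
  have hdecay : AverageDecayNearFrontier volume Ω g 1 C α h₀ :=
    fun h hh hhh₀ c hc hp => (hyp h hh hhh₀ c hc hp).2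
  filter_upwards [htend.eventually_lt_const one_pos,
    htend.eventually_lt_const (by positivity : (0 : ℝ) < 2 * h₀)] with n hd1 hdh₀
  rcases (infDist_nonneg (x := x n) (s := frontier Ω)).eq_or_lt with hd | hd
  · rw [hdecay.eq_of_infDist_eq_zero hΩ hg hα0 hh₀ (hxΩ n) hd.symm, sub_self, abs_zero]
    positivity
  · exact (hdecay.abs_sub_le_of_infDist_pos hΩ hg (hxΩ n) hd hdh₀ (hlip n)).trans
      (mul_half_rpow_add_mul_half_le hC.le L.coe_nonneg hd hd1.le hα0 (by linarith))

/-- From a one-sided bound `g ≤ 1 + Ch^α` and a small average `⨍|g-1| ≤ Ch^α` on balls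
near `∂Ω`, together with a Lipschitz modulus of continuity, one deduces the pointwise
rate `|g(xₙ) - 1| ≤ C'(dₙ^α + dₙ^{α/2})` as `dₙ = dist(xₙ,∂Ω) → 0`, with `C'` depending
only on `C`, `L` and `N`. -/
theorem stmt17 (N : ℕ) (C : ℝ) (L : NNReal) (hC : 0 < C) (hL : 0 < L) :
    ∃ C' > (0:ℝ),
    ∀ (Ω : Set (EuclideanSpace ℝ (Fin N))), IsOpen Ω → Ω.Nonempty →
    ∀ g : EuclideanSpace ℝ (Fin N) → ℝ, Continuous g → (∃ Kb : ℝ, ∀ x, |g x| ≤ Kb) →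
    ∀ α : ℝ, α ∈ Set.Ioc (0:ℝ) 1 →
    ∀ h₀ : ℝ, 0 < h₀ →
    (∀ h : ℝ, 0 < h → h < h₀ →
      ∀ c : EuclideanSpace ℝ (Fin N), ball c h ⊆ Ω →
        (∃ p ∈ ball c h, Metric.infDist p (frontier Ω) ≤ 2 * h) →
        (∀ x ∈ ball c h, g x ≤ 1 + C * h ^ α) ∧
        (volume (ball c h)).toReal⁻¹ * (∫ x in ball c h, |g x - 1|) ≤ C * h ^ α) →
    ∀ x : ℕ → EuclideanSpace ℝ (Fin N), (∀ n, x n ∈ Ω) →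
    Tendsto (fun n => Metric.infDist (x n) (frontier Ω)) atTop (nhds 0) →
    (∀ n, LipschitzOnWith L g (ball (x n) (Metric.infDist (x n) (frontier Ω) / 2))) →
    ∀ᶠ n in atTop,
      |g (x n) - 1| ≤ C' * ((Metric.infDist (x n) (frontier Ω)) ^ α
        + (Metric.infDist (x n) (frontier Ω)) ^ (α / 2)) :=
  stmt17_general N C L hC
end
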